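/- arXiv:2304.10329 — 7 statements merged into one kernel-verified Lean document; each statement's English description precedes it below -/
import Mathlib

section
/- Let a,b,c,d ∈ ℂ³ be nonzero vectors such that the Hermitian products ⟨c,a⟩, ⟨c,b⟩, ⟨d,a⟩, ⟨d,b⟩ are all nonzero. Define the cross-ratio X(a,b,c,d) = (⟨c,a⟩⟨d,b⟩)/(⟨c,b⟩⟨d,a⟩). Then ⟨a ⊠ b, c ⊠ d⟩ = 0 if and only if X(a,b,c,d) = 1. -/
open Complex

/-- The signature (2,1) Hermitian form on ℂ³. -/
def herm (z w : Fin 3 → ℂ) : ℂ :=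
  z 0 * star (w 0) + z 1 * star (w 1) - z 2 * star (w 2)

/-- The usual cross product on ℂ³. -/
def cross (u v : Fin 3 → ℂ) : Fin 3 → ℂ :=
  ![u 1 * v 2 - u 2 * v 1, u 2 * v 0 - u 0 * v 2, u 0 * v 1 - u 1 * v 0]

/-- The box product u ⊠ v = J · conj (u ∧ v), with J = diag(1,1,−1). -/
def box (u v : Fin 3 → ℂ) : Fin 3 → ℂ :=
  ![star (cross u v 0), star (cross u v 1), - star (cross u v 2)]

/-- The Hermitian cross-ratio X(a,b,c,d). -/
noncomputable def crossRatio (a b c d : Fin 3 → ℂ) : ℂ :=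
  (herm c a * herm d b) / (herm c b * herm d a)

-- The Binet–Cauchy identity for the box product: `J` and the conjugation in `box` cancel
-- against those in `herm`, leaving the bilinear Lagrange identity.
theorem herm_box_box (a b c d : Fin 3 → ℂ) :
    herm (box a b) (box c d) = herm c b * herm d a - herm c a * herm d b := by
  simp only [herm, box, cross, Matrix.cons_val_zero, Matrix.cons_val_one, Matrix.cons_val_two,
    Matrix.head_cons, Matrix.tail_cons, star_neg, star_sub, star_mul, star_star]
  ring

theorem crossRatio_eq_one_iff {a b c d : Fin 3 → ℂ} (h : herm c b * herm d a ≠ 0) :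
    crossRatio a b c d = 1 ↔ herm c b * herm d a = herm c a * herm d b := by
  rw [crossRatio, div_eq_one_iff_eq h, eq_comm]

theorem stmt1_general (a b c d : Fin 3 → ℂ)
    (hcb : herm c b ≠ 0)
    (hda : herm d a ≠ 0) :
    herm (box a b) (box c d) = 0 ↔ crossRatio a b c d = 1 := by
  rw [herm_box_box, sub_eq_zero, crossRatio_eq_one_iff (mul_ne_zero hcb hda)]

theorem stmt1 (a b c d : Fin 3 → ℂ)
    (ha : a ≠ 0) (hb : b ≠ 0) (hc : c ≠ 0) (hd : d ≠ 0)
    (hca : herm c a ≠ 0) (hcb : herm c b ≠ 0)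
    (hda : herm d a ≠ 0) (hdb : herm d b ≠ 0) :
    herm (box a b) (box c d) = 0 ↔ crossRatio a b c d = 1 :=
  stmt1_general a b c d hcb hda
end

section
/- Let θ, α, t ∈ ℝ. The point e^{iθ} + t·e^{−iθ/2} lies on the line {e^{iα} + s·e^{−iα/2} : s ∈ ℝ} if and only if sin((α−θ)/2)·(t − 2cos(θ/2 + α)) = 0, i.e. if and only if e^{i(α−θ)/2} ∈ ℝ or cos(θ/2 + α) = t/2. -/
open Complex

/-
A point z lies on the line w + ℝ·u exactly when (z - w)/u is real. For the two tangent lines of the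
deltoid, dividing by e^{-iα/2} turns every exponential into one of the form e^{ix}, so the
imaginary part is a sum of sines, which sum-to-product factors as sin((α-θ)/2)·(t - 2cos(θ/2 + α)).
-/

theorem Complex.exists_ofReal_mul_add_eq_iff {z w u : ℂ} (hu : u ≠ 0) :
    (∃ s : ℝ, z = w + s * u) ↔ ((z - w) / u).im = 0 := by
  constructor
  · rintro ⟨s, rfl⟩
    rw [add_sub_cancel_left, mul_div_cancel_right₀ _ hu, ofReal_im]
  · intro h
    refine ⟨((z - w) / u).re, ?_⟩
    have hreal : (((z - w) / u).re : ℂ) = (z - w) / u := Complex.ext (by simp) (by simp [h])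
    rw [hreal, div_mul_cancel₀ _ hu, add_sub_cancel]

theorem Real.sin_add_half_sub_sin_three_halves (θ α : ℝ) :
    Real.sin (θ + α / 2) - Real.sin (3 * (α / 2)) =
      -(2 * Real.sin ((α - θ) / 2) * Real.cos (θ / 2 + α)) := by
  rw [Real.sin_sub_sin, show (θ + α / 2 - 3 * (α / 2)) / 2 = -((α - θ) / 2) by ring,
    show (θ + α / 2 + 3 * (α / 2)) / 2 = θ / 2 + α by ring, Real.sin_neg]
  ring

theorem deltoid_tangent_im (θ α t : ℝ) :
    ((Complex.exp (θ * Complex.I) + t * Complex.exp (-(θ / 2) * Complex.I)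
        - Complex.exp (α * Complex.I)) / Complex.exp (-(α / 2) * Complex.I)).im
      = Real.sin ((α - θ) / 2) * (t - 2 * Real.cos (θ / 2 + α)) := by
  rw [sub_div, add_div, mul_div_assoc, ← exp_sub, ← exp_sub, ← exp_sub]
  simp only [neg_mul, sub_neg_eq_add, sub_im, add_im, exp_im, add_re, mul_re, ofReal_re, I_re, mul_zero,
    ofReal_im, I_im, mul_one, sub_self, div_ofNat_re, div_ofNat_im, zero_div, add_zero, Real.exp_zero, mul_im,
    one_mul, neg_re, neg_zero, neg_im, zero_mul]
  have key := Real.sin_add_half_sub_sin_three_halves θ α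
  ring_nf at key ⊢
  linear_combination key

theorem stmt7 (θ α t : ℝ) :
    ((∃ s : ℝ, Complex.exp (θ * Complex.I) + t * Complex.exp (-(θ / 2) * Complex.I) =
        Complex.exp (α * Complex.I) + s * Complex.exp (-(α / 2) * Complex.I)) ↔
      Real.sin ((α - θ) / 2) * (t - 2 * Real.cos (θ / 2 + α)) = 0) ∧
    (Real.sin ((α - θ) / 2) * (t - 2 * Real.cos (θ / 2 + α)) = 0 ↔
      Real.sin ((α - θ) / 2) = 0 ∨ Real.cos (θ / 2 + α) = t / 2) := by
  refine ⟨?_, ?_⟩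
  · rw [exists_ofReal_mul_add_eq_iff (exp_ne_zero _), deltoid_tangent_im]
  · rw [mul_eq_zero, sub_eq_zero, eq_div_iff two_ne_zero, mul_comm, eq_comm (a := t)]
end

section
/- Let θ, t ∈ ℝ with |t| ≤ 2 and set γ = arccos(t/2). Then the three angles α₁ = θ, α₂ = γ − θ/2, α₃ = −γ − θ/2 satisfy α₁ + α₂ + α₃ = 0, and for each k the point e^{iθ} + t·e^{−iθ/2} lies on the tangent line {e^{iα_k} + s·e^{−iα_k/2} : s ∈ ℝ}. -/
/-!
The tangent lines at parameters `α` and `β` meet at `e^{iα} + e^{iβ} + e^{-i(α+β)}`, a point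
symmetric in the three parameters `α`, `β`, `-(α+β)`: on the tangent line at `α` it has
coordinate `s = 2 cos (β + α/2)`, because `2 cos x = e^{ix} + e^{-ix}`. Writing `t = 2 cos γ`,
the point of coordinate `t` on the tangent line at `θ` is thus also on the tangent lines at
`±γ - θ/2`.
-/

open Complex

theorem exp_add_two_cos_mul_exp (α β : ℝ) :
    exp (α * I) + ((2 * Real.cos (β + α / 2) : ℝ) : ℂ) * exp (-(α / 2) * I) =
      exp (α * I) + exp (β * I) + exp (-(α + β) * I) := by
  rw [ofReal_mul, ofReal_cos, ofReal_ofNat, two_cos, add_mul, ← exp_add, ← exp_add]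
  push_cast
  ring_nf

theorem exp_add_two_cos_mul_exp_comm (α β : ℝ) :
    exp (α * I) + ((2 * Real.cos (β + α / 2) : ℝ) : ℂ) * exp (-(α / 2) * I) =
      exp (β * I) + ((2 * Real.cos (α + β / 2) : ℝ) : ℂ) * exp (-(β / 2) * I) := by
  rw [exp_add_two_cos_mul_exp, exp_add_two_cos_mul_exp, add_comm (β : ℂ) α]
  ring

theorem stmt8 (θ t : ℝ) (ht : |t| ≤ 2) :
    let γ := Real.arccos (t / 2)
    let α₁ := θ
    let α₂ := γ - θ / 2
    let α₃ := -γ - θ / 2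
    α₁ + α₂ + α₃ = 0 ∧
    (∀ α ∈ ({α₁, α₂, α₃} : Set ℝ),
      ∃ s : ℝ, Complex.exp (θ * Complex.I) + t * Complex.exp (-(θ / 2) * Complex.I) =
        Complex.exp (α * Complex.I) + s * Complex.exp (-(α / 2) * Complex.I)) := by
  intro γ α₁ α₂ α₃
  obtain ⟨ht_lower, ht_upper⟩ := abs_le.mp ht
  have hcos : Real.cos γ = t / 2 := Real.cos_arccos (by linarith) (by linarith)
  have ht_cos : ∀ α ∈ ({α₂, α₃} : Set ℝ), t = 2 * Real.cos (α + θ / 2) := by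
    rintro α (rfl | rfl)
    · rw [show α₂ + θ / 2 = γ by ring, hcos]; ring
    · rw [show α₃ + θ / 2 = -γ by ring, Real.cos_neg, hcos]; ring
  refine ⟨by ring, ?_⟩
  rintro α (rfl | hα)
  · exact ⟨t, rfl⟩
  · refine ⟨2 * Real.cos (θ + α / 2), ?_⟩
    rw [ht_cos α hα, exp_add_two_cos_mul_exp_comm]
end

section
/- Let θ₁, θ₂ ∈ ℝ, φ ∈ ℝ, and consider the complex number T = (2e^{i(θ₂−θ₁)/3} + e^{−2i(θ₂−θ₁)/3}) − 4·sin²(φ)·sin(θ₁/2)·sin(θ₂/2)·e^{−i(θ₂−θ₁)/6}. Then T lies on the tangent line to the deltoid at the point of parameter (θ₂−θ₁)/3, i.e. T ∈ {2e^{iβ} + e^{−2iβ} + t·e^{−iβ/2} : t ∈ ℝ} with β = (θ₂−θ₁)/3. -/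
open Complex

theorem stmt9 (θ₁ θ₂ φ : ℝ) :
    let β : ℝ := (θ₂ - θ₁) / 3
    let T : ℂ := (2 * Complex.exp (β * Complex.I) + Complex.exp (-2 * β * Complex.I)) -
      4 * Real.sin φ ^ 2 * Real.sin (θ₁ / 2) * Real.sin (θ₂ / 2) *
        Complex.exp (-((θ₂ - θ₁) / 6) * Complex.I)
    T ∈ {z : ℂ | ∃ t : ℝ, z = 2 * Complex.exp (β * Complex.I) +
        Complex.exp (-2 * β * Complex.I) + t * Complex.exp (-(β / 2) * Complex.I)} := by
  intro β T
  refine ⟨-(4 * Real.sin φ ^ 2 * Real.sin (θ₁ / 2) * Real.sin (θ₂ / 2)), ?_⟩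
  have half_β : ((θ₂ - θ₁) / 6 : ℂ) = (β : ℂ) / 2 := by push_cast [β]; ring
  simp only [T, half_β]
  push_cast
  ring
end

section
/- Let H be the Hermitian 3×3 matrix with diagonal entries 1 and H_{12}=r₃u, H_{23}=r₁u, H_{31}=r₂u (and conjugate-symmetric entries), where r₁,r₂,r₃ > 0 and u = e^{iα/3}. Then det H = 1 − r₁² − r₂² − r₃² + 2r₁r₂r₃cos(α). In particular det H < 0 if and only if cos(α) < (r₁² + r₂² + r₃² − 1)/(2r₁r₂r₃). -/
open Complex Matrix

/-! In the expansion of det H the phase u cancels from every product except the two cyclic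
ones, which carry u³ and u⁻³; since u³ = e^{iα}, their sum is 2 cos α. The inequality is
then a rearrangement, dividing by 2 r₁ r₂ r₃ > 0. -/

theorem Matrix.det_fin_three_phase {K : Type*} [Field K] (a b c u : K) (hu : u ≠ 0) :
    !![1, c * u, b * u⁻¹; c * u⁻¹, 1, a * u; b * u, a * u⁻¹, 1].det =
      1 - a ^ 2 - b ^ 2 - c ^ 2 + a * b * c * (u ^ 3 + u⁻¹ ^ 3) := by
  simp only [det_fin_three, of_apply, cons_val', cons_val_zero, cons_val_fin_one, cons_val_one,
    cons_val, mul_one, one_mul, inv_pow]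
  linear_combination (-(a ^ 2 + b ^ 2 + c ^ 2)) * mul_inv_cancel₀ hu

theorem Complex.exp_mul_I_pow_add_inv_pow (x : ℂ) (n : ℕ) :
    exp (x * I) ^ n + (exp (x * I))⁻¹ ^ n = 2 * cos (n * x) := by
  rw [inv_pow, ← exp_nat_mul, ← exp_neg, two_cos]
  ring_nf

theorem stmt11 (r₁ r₂ r₃ α : ℝ) (hr₁ : 0 < r₁) (hr₂ : 0 < r₂) (hr₃ : 0 < r₃) :
    let u : ℂ := Complex.exp ((α / 3 : ℝ) * Complex.I)
    let H : Matrix (Fin 3) (Fin 3) ℂ :=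
      !![1, (r₃ : ℂ) * u, (r₂ : ℂ) * u⁻¹;
         (r₃ : ℂ) * u⁻¹, 1, (r₁ : ℂ) * u;
         (r₂ : ℂ) * u, (r₁ : ℂ) * u⁻¹, 1]
    H.det = ((1 - r₁ ^ 2 - r₂ ^ 2 - r₃ ^ 2 + 2 * r₁ * r₂ * r₃ * Real.cos α : ℝ) : ℂ) ∧
    (H.det.re < 0 ↔ Real.cos α < (r₁ ^ 2 + r₂ ^ 2 + r₃ ^ 2 - 1) / (2 * r₁ * r₂ * r₃)) := by
  intro u H
  have hdet : H.det = ((1 - r₁ ^ 2 - r₂ ^ 2 - r₃ ^ 2 + 2 * r₁ * r₂ * r₃ * Real.cos α : ℝ) : ℂ) := by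
    rw [det_fin_three_phase _ _ _ _ (exp_ne_zero _), exp_mul_I_pow_add_inv_pow]
    push_cast
    rw [mul_div_cancel₀ _ three_ne_zero]
    ring
  refine ⟨hdet, ?_⟩
  rw [hdet, ofReal_re, lt_div_iff₀ (by positivity)]
  constructor <;> intro h <;> linarith
end

section
/- Let A, B ∈ SU(2,1) and let P_A, P_B, P_C ∈ ℂ³ be eigenvectors: A·P_A = λ_A·P_A, B·P_B = λ_B·P_B, (AB)·P_C = λ_{AB}·P_C, with all pairwise Hermitian products among P_A, P_B, P_C, and A⁻¹P_C nonzero. Set P_{BA} := A⁻¹·P_C. Then the cross-ratio X(P_A, P_B, P_C, P_{BA}) = (⟨P_C,P_A⟩⟨P_{BA},P_B⟩)/(⟨P_C,P_B⟩⟨P_{BA},P_A⟩) equals λ_A·λ_B/λ_{AB}. -/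
open Complex Matrix

/-- The matrix of the Hermitian form: J = diag(1,1,−1). -/
def Jmat : Matrix (Fin 3) (Fin 3) ℂ := !![1, 0, 0; 0, 1, 0; 0, 0, -1]

/-!
Both factors of the cross-ratio that involve `P_{BA}` can be traded for factors involving `P_C`:
`A` preserves the form and sends `(P_{BA}, P_A)` to `(P_C, λ_A P_A)`, while `AB` preserves it and
sends `(P_C, P_B)` to `(λ_{AB} P_C, λ_B A P_B)`, i.e. to multiples of `A(P_{BA}, P_B)`. Since the
eigenvalues have modulus one, their conjugates are their inverses.
-/

lemma herm_eq_star_dotProduct_mulVec (z w : Fin 3 → ℂ) : herm z w = star w ⬝ᵥ (Jmat *ᵥ z) := by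
  simp [herm, Jmat, dotProduct, mulVec, Fin.sum_univ_three, mul_comm, sub_eq_add_neg]

lemma herm_mulVec_mulVec {M : Matrix (Fin 3) (Fin 3) ℂ} (hM : Mᴴ * Jmat * M = Jmat)
    (z w : Fin 3 → ℂ) : herm (M *ᵥ z) (M *ᵥ w) = herm z w := by
  rw [herm_eq_star_dotProduct_mulVec, herm_eq_star_dotProduct_mulVec, star_mulVec,
    ← dotProduct_mulVec, mulVec_mulVec, mulVec_mulVec, hM]

lemma form_preserved_mul {n R : Type*} [Fintype n] [Semiring R] [StarRing R]
    {J A B : Matrix n n R} (hA : Aᴴ * J * A = J) (hB : Bᴴ * J * B = J) :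
    (A * B)ᴴ * J * (A * B) = J := calc
  (A * B)ᴴ * J * (A * B) = Bᴴ * (Aᴴ * J * A) * B := by
    simp only [conjTranspose_mul, Matrix.mul_assoc]
  _ = J := by rw [hA, hB]

lemma herm_smul_left (c : ℂ) (z w : Fin 3 → ℂ) : herm (c • z) w = c * herm z w := by
  simp only [herm, Pi.smul_apply, smul_eq_mul]
  ring

lemma herm_smul_right (c : ℂ) (z w : Fin 3 → ℂ) : herm z (c • w) = star c * herm z w := by
  simp only [herm, Pi.smul_apply, smul_eq_mul, star_mul']
  ring

theorem stmt12_general (A B : Matrix (Fin 3) (Fin 3) ℂ)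
    (hA : Aᴴ * Jmat * A = Jmat)
    (hB : Bᴴ * Jmat * B = Jmat)
    (PA PB PC PBA : Fin 3 → ℂ) (lA lB lAB : ℂ)
    (hlA : ‖lA‖ = 1) (hlB : ‖lB‖ = 1) (hlAB : ‖lAB‖ = 1)
    (hPA : A.mulVec PA = lA • PA) (hPB : B.mulVec PB = lB • PB)
    (hPC : (A * B).mulVec PC = lAB • PC)
    (hPBA : A.mulVec PBA = PC)
    (h2 : herm PC PB ≠ 0)
    (h3 : herm PBA PA ≠ 0) :
    (herm PC PA * herm PBA PB) / (herm PC PB * herm PBA PA) = lA * lB / lAB := by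
  have hlA_ne : lA ≠ 0 := norm_ne_zero_iff.mp (hlA ▸ one_ne_zero)
  have hlB_ne : lB ≠ 0 := norm_ne_zero_iff.mp (hlB ▸ one_ne_zero)
  have hlAB_ne : lAB ≠ 0 := norm_ne_zero_iff.mp (hlAB ▸ one_ne_zero)
  have hPBA_PA : herm PBA PA = lA⁻¹ * herm PC PA := calc
    herm PBA PA = herm (A *ᵥ PBA) (A *ᵥ PA) := (herm_mulVec_mulVec hA PBA PA).symm
    _ = lA⁻¹ * herm PC PA := by rw [hPBA, hPA, herm_smul_right, star_def, inv_eq_conj hlA]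
  have hPC_PB : herm PC PB = lAB * lB⁻¹ * herm PBA PB := calc
    herm PC PB = herm ((A * B) *ᵥ PC) ((A * B) *ᵥ PB) :=
      (herm_mulVec_mulVec (form_preserved_mul hA hB) PC PB).symm
    _ = herm (lAB • A *ᵥ PBA) (A *ᵥ (lB • PB)) := by rw [hPC, ← mulVec_mulVec, hPB, hPBA]
    _ = lAB * lB⁻¹ * herm PBA PB := by
      rw [herm_smul_left, mulVec_smul, herm_smul_right, herm_mulVec_mulVec hA, star_def,
        inv_eq_conj hlB, mul_assoc]
  rw [div_eq_div_iff (mul_ne_zero h2 h3) hlAB_ne, hPBA_PA, hPC_PB]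
  field_simp

theorem stmt12 (A B : Matrix (Fin 3) (Fin 3) ℂ)
    (hA : Aᴴ * Jmat * A = Jmat) (hdA : A.det = 1)
    (hB : Bᴴ * Jmat * B = Jmat) (hdB : B.det = 1)
    (PA PB PC PBA : Fin 3 → ℂ) (lA lB lAB : ℂ)
    (hlA : ‖lA‖ = 1) (hlB : ‖lB‖ = 1) (hlAB : ‖lAB‖ = 1)
    (hPA : A.mulVec PA = lA • PA) (hPB : B.mulVec PB = lB • PB)
    (hPC : (A * B).mulVec PC = lAB • PC)
    (hPBA : A.mulVec PBA = PC)
    (h1 : herm PC PA ≠ 0) (h2 : herm PC PB ≠ 0)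
    (h3 : herm PBA PA ≠ 0) (h4 : herm PBA PB ≠ 0)
    (h5 : herm PA PB ≠ 0) :
    (herm PC PA * herm PBA PB) / (herm PC PB * herm PBA PA) = lA * lB / lAB :=
  stmt12_general A B hA hB PA PB PC PBA lA lB lAB hlA hlB hlAB hPA hPB hPC hPBA h2 h3
end

section
/- Let A₁, B₁, A₂, B₂ ∈ SU(2) satisfy Tr(A₁) = Tr(A₂), Tr(B₁) = Tr(B₂), and Tr(A₁B₁) = Tr(A₂B₂), and assume the pair (A₁,B₁) is irreducible (A₁ and B₁ have no common eigenvector). Then there exists P ∈ SU(2) with A₂ = P A₁ P⁻¹ and B₂ = P B₁ P⁻¹. -/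
open Complex Matrix ComplexConjugate

/-!
Conjugating by `SU(2)` one may take `A = diag(a, ā)` with `Im a ≥ 0` (move an eigenvector of `A`
to `e₀`; an element of `SU(2)` preserving the line `ℂ e₀` is diagonal), and then
`B = [[b, c], [-c̄, b̄]]`. Now `tr A = 2 Re a` determines `a`. Irreducibility forces `a ∉ ℝ` and
`c ≠ 0`, so `tr B = 2 Re b` and `tr AB = 2 Re (a b)` determine `b`, and `|c|² = 1 - |b|²`
determines `|c|`. Conjugation by `diag(u, ū)` commutes with `A` and multiplies `c` by `u²`, which
adjusts the phase of `c`.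
-/

theorem Complex.eq_of_re_eq_of_normSq_eq_of_im_nonneg {z w : ℂ} (hre : z.re = w.re)
    (hnorm : normSq z = normSq w) (hz : 0 ≤ z.im) (hw : 0 ≤ w.im) : z = w := by
  refine Complex.ext hre ((mul_self_inj hz hw).mp ?_)
  rw [normSq_apply, normSq_apply, hre] at hnorm
  linarith

theorem Complex.eq_of_re_eq_of_re_mul_eq {a z w : ℂ} (ha : a.im ≠ 0) (hre : z.re = w.re)
    (hmul : (a * z).re = (a * w).re) : z = w := by
  refine Complex.ext hre (mul_left_cancel₀ ha ?_)
  simp only [mul_re, hre] at hmul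
  linarith

namespace Matrix

section Eigenvector

variable {n K : Type*} [Fintype n] [Field K]

def HasCommonEigenvector (A B : Matrix n n K) : Prop :=
  ∃ (v : n → K) (μ ν : K), v ≠ 0 ∧ A *ᵥ v = μ • v ∧ B *ᵥ v = ν • v

theorem exists_mulVec_eq_smul [IsAlgClosed K] [Nonempty n] (A : Matrix n n K) :
    ∃ v : n → K, v ≠ 0 ∧ ∃ μ : K, A *ᵥ v = μ • v := by
  obtain ⟨μ, hμ⟩ := Module.End.exists_eigenvalue (mulVecLin A)
  obtain ⟨v, hv⟩ := hμ.exists_hasEigenvector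
  exact ⟨v, hv.2, μ, hv.apply_eq_smul⟩

theorem hasCommonEigenvector_smul_one [DecidableEq n] [IsAlgClosed K] [Nonempty n] (μ : K)
    (B : Matrix n n K) :
    HasCommonEigenvector (μ • 1) B := by
  obtain ⟨v, hv, ν, hBv⟩ := exists_mulVec_eq_smul B
  exact ⟨v, μ, ν, hv, by simp [smul_mulVec], hBv⟩

theorem HasCommonEigenvector.conj [DecidableEq n] {A B Q R : Matrix n n K} (hRQ : R * Q = 1)
    (h : HasCommonEigenvector A B) : HasCommonEigenvector (Q * A * R) (Q * B * R) := by
  obtain ⟨v, μ, ν, hv, hAv, hBv⟩ := h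
  have hconj : ∀ {M : Matrix n n K} {c : K}, M *ᵥ v = c • v →
      (Q * M * R) *ᵥ (Q *ᵥ v) = c • Q *ᵥ v := fun hM => by
    rw [mulVec_mulVec, mul_assoc, mul_assoc, hRQ, mul_one, ← mulVec_mulVec, hM, mulVec_smul]
  refine ⟨Q *ᵥ v, μ, ν, fun h0 => hv ?_, hconj hAv, hconj hBv⟩
  simpa [mulVec_mulVec, hRQ] using congrArg (R *ᵥ ·) h0

end Eigenvector

section SimulConj

variable {n α : Type*} [Fintype n] [DecidableEq n] [CommRing α] [StarRing α]

def SimulConj (A B A' B' : Matrix n n α) : Prop :=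
  ∃ P ∈ specialUnitaryGroup n α, A' = P * A * star P ∧ B' = P * B * star P

theorem star_mem_specialUnitaryGroup {P : Matrix n n α} (hP : P ∈ specialUnitaryGroup n α) :
    star P ∈ specialUnitaryGroup n α :=
  (star (⟨P, hP⟩ : specialUnitaryGroup n α)).2

namespace SimulConj

variable {A B A' B' A'' B'' : Matrix n n α}

theorem symm (h : SimulConj A B A' B') : SimulConj A' B' A B := by
  obtain ⟨P, hP, rfl, rfl⟩ := h
  have hPP : star P * P = 1 := Unitary.star_mul_self_of_mem hP.1
  have hcancel : ∀ M : Matrix n n α, star P * (P * M * star P) * P = M := fun M => by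
    simp only [← mul_assoc, hPP, one_mul]
    simp only [mul_assoc, hPP, mul_one]
  exact ⟨star P, star_mem_specialUnitaryGroup hP, by rw [star_star, hcancel],
    by rw [star_star, hcancel]⟩

theorem trans (h : SimulConj A B A' B') (h' : SimulConj A' B' A'' B'') :
    SimulConj A B A'' B'' := by
  obtain ⟨P, hP, rfl, rfl⟩ := h
  obtain ⟨P', hP', rfl, rfl⟩ := h'
  exact ⟨P' * P, mul_mem hP' hP, by simp only [star_mul, mul_assoc],
    by simp only [star_mul, mul_assoc]⟩

theorem traces_eq (h : SimulConj A B A' B') :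
    A'.trace = A.trace ∧ B'.trace = B.trace ∧ (A' * B').trace = (A * B).trace := by
  obtain ⟨P, hP, rfl, rfl⟩ := h
  have hPP : star P * P = 1 := Unitary.star_mul_self_of_mem hP.1
  have htrace : ∀ M : Matrix n n α, (P * M * star P).trace = M.trace := fun M => by
    rw [trace_mul_comm, ← mul_assoc, hPP, one_mul]
  refine ⟨htrace A, htrace B, ?_⟩
  rw [← htrace (A * B)]
  simp only [mul_assoc, ← mul_assoc (star P) P, hPP, one_mul]

end SimulConj

theorem SimulConj.hasCommonEigenvector {K : Type*} [Field K] [StarRing K]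
    {A B A' B' : Matrix n n K} (h : SimulConj A B A' B') (hAB : HasCommonEigenvector A B) :
    HasCommonEigenvector A' B' := by
  obtain ⟨P, hP, rfl, rfl⟩ := h
  exact hAB.conj (Unitary.star_mul_self_of_mem hP.1)

end SimulConj

section SU2

def su2 (x y : ℂ) : Matrix (Fin 2) (Fin 2) ℂ := !![x, y; -conj y, conj x]

theorem su2_mul (x y x' y' : ℂ) :
    su2 x y * su2 x' y' = su2 (x * x' - y * conj y') (x * y' + y * conj x') := by
  ext i j; fin_cases i <;> fin_cases j <;> simp [su2] <;> ring

theorem star_su2 (x y : ℂ) : star (su2 x y) = su2 (conj x) (-y) := by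
  ext i j; fin_cases i <;> fin_cases j <;> simp [su2]

theorem su2_one_zero : su2 1 0 = 1 := by
  ext i j; fin_cases i <;> fin_cases j <;> simp [su2]

theorem su2_eq_smul_one {x : ℂ} (hx : conj x = x) : su2 x 0 = x • 1 := by
  ext i j; fin_cases i <;> fin_cases j <;> simp [su2, hx]

theorem det_su2 (x y : ℂ) : (su2 x y).det = (normSq x + normSq y : ℝ) := by
  simp [su2, det_fin_two, mul_conj]

theorem trace_su2 (x y : ℂ) : (su2 x y).trace = (2 * x.re : ℝ) := by
  simp [su2, trace_fin_two, add_conj]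

theorem su2_mulVec_single (x y : ℂ) : su2 x y *ᵥ ![1, 0] = ![x, -conj y] := by
  ext i; fin_cases i <;> simp [su2]

theorem su2_mem_specialUnitaryGroup_iff {x y : ℂ} :
    su2 x y ∈ specialUnitaryGroup (Fin 2) ℂ ↔ normSq x + normSq y = 1 := by
  have hprod : su2 x y * star (su2 x y) = su2 (normSq x + normSq y : ℝ) 0 := by
    rw [star_su2, su2_mul]
    congr 1
    · simp [mul_conj]
    · simp only [conj_conj]; ring
  rw [mem_specialUnitaryGroup_iff, mem_unitaryGroup_iff, hprod, det_su2, ← su2_one_zero]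
  constructor
  · rintro ⟨-, h⟩; exact_mod_cast h
  · intro h; rw [h]; simp

theorem eq_su2_of_mem_specialUnitaryGroup {M : Matrix (Fin 2) (Fin 2) ℂ}
    (hM : M ∈ specialUnitaryGroup (Fin 2) ℂ) : M = su2 (M 0 0) (M 0 1) := by
  obtain ⟨hMu, hdet⟩ := mem_specialUnitaryGroup_iff.mp hM
  have hstar : star M = M.adjugate := by
    rw [← one_smul ℂ M.adjugate, ← Ring.inverse_one, ← hdet, ← inv_def]
    exact (inv_eq_left_inv (Unitary.star_mul_self_of_mem hMu)).symm
  rw [adjugate_fin_two] at hstar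
  have h11 : M 1 1 = conj (M 0 0) := by simpa using (congrFun (congrFun hstar 0) 0).symm
  have h10 : M 1 0 = -conj (M 0 1) := by
    simpa [neg_eq_iff_eq_neg] using (congrFun (congrFun hstar 1) 0).symm
  ext i j; fin_cases i <;> fin_cases j <;> simp [su2, h11, h10]

theorem exists_mem_specialUnitaryGroup_mulVec_single_eq_smul {v : Fin 2 → ℂ} (hv : v ≠ 0) :
    ∃ Q ∈ specialUnitaryGroup (Fin 2) ℂ, ∃ s : ℂ, Q *ᵥ ![1, 0] = s • v := by
  set N := normSq (v 0) + normSq (v 1)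
  have hN : 0 < N := by
    by_contra! hN
    have h0 : normSq (v 0) = 0 := by linarith [normSq_nonneg (v 0), normSq_nonneg (v 1)]
    have h1 : normSq (v 1) = 0 := by linarith [normSq_nonneg (v 0), normSq_nonneg (v 1)]
    exact hv (by ext i; fin_cases i; exacts [normSq_eq_zero.mp h0, normSq_eq_zero.mp h1])
  set s : ℝ := (√N)⁻¹
  refine ⟨su2 (s * v 0) (-(s * conj (v 1))), ?_, s, ?_⟩
  · rw [su2_mem_specialUnitaryGroup_iff]
    simp only [normSq_neg, normSq_mul, normSq_ofReal, normSq_conj, s]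
    field_simp
    rw [Real.sq_sqrt hN.le]
  · rw [su2_mulVec_single]; ext i; fin_cases i <;> simp

theorem exists_conj_eq_su2_diag {A : Matrix (Fin 2) (Fin 2) ℂ}
    (hA : A ∈ specialUnitaryGroup (Fin 2) ℂ) :
    ∃ P ∈ specialUnitaryGroup (Fin 2) ℂ, ∃ a : ℂ, P * A * star P = su2 a 0 := by
  obtain ⟨v, hv, μ, hAv⟩ := exists_mulVec_eq_smul A
  obtain ⟨Q, hQ, s, hQv⟩ := exists_mem_specialUnitaryGroup_mulVec_single_eq_smul hv
  have hQQ : star Q * Q = 1 := Unitary.star_mul_self_of_mem hQ.1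
  have hmem : star Q * A * Q ∈ specialUnitaryGroup (Fin 2) ℂ :=
    mul_mem (mul_mem (star_mem_specialUnitaryGroup hQ) hA) hQ
  have heigen : (star Q * A * Q) *ᵥ ![1, 0] = μ • ![1, 0] := by
    rw [← mulVec_mulVec, hQv, mulVec_smul, ← mulVec_mulVec, hAv, mulVec_smul, smul_comm,
      ← mulVec_smul, ← hQv, mulVec_mulVec, hQQ, one_mulVec]
  rw [eq_su2_of_mem_specialUnitaryGroup hmem, su2_mulVec_single] at heigen
  have h0 : (star Q * A * Q) 0 0 = μ := by simpa using congrFun heigen 0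
  have h1 : (star Q * A * Q) 0 1 = 0 := by simpa using congrFun heigen 1
  refine ⟨star Q, star_mem_specialUnitaryGroup hQ, μ, ?_⟩
  rw [star_star, eq_su2_of_mem_specialUnitaryGroup hmem, h0, h1]

theorem exists_conj_eq_su2_diag_im_nonneg {A : Matrix (Fin 2) (Fin 2) ℂ}
    (hA : A ∈ specialUnitaryGroup (Fin 2) ℂ) :
    ∃ P ∈ specialUnitaryGroup (Fin 2) ℂ, ∃ a : ℂ, 0 ≤ a.im ∧ P * A * star P = su2 a 0 := by
  obtain ⟨P, hP, a, hPA⟩ := exists_conj_eq_su2_diag hA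
  rcases le_total 0 a.im with ha | ha
  · exact ⟨P, hP, a, ha, hPA⟩
  · have hJ : su2 0 1 ∈ specialUnitaryGroup (Fin 2) ℂ :=
      su2_mem_specialUnitaryGroup_iff.mpr (by simp)
    refine ⟨su2 0 1 * P, mul_mem hJ hP, conj a, by simpa using ha, ?_⟩
    calc su2 0 1 * P * A * star (su2 0 1 * P)
        _ = su2 0 1 * (P * A * star P) * star (su2 0 1) := by simp only [star_mul, mul_assoc]
        _ = su2 (conj a) 0 := by rw [hPA, star_su2, su2_mul, su2_mul]; simp

theorem exists_simulConj_su2 {A B : Matrix (Fin 2) (Fin 2) ℂ}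
    (hA : A ∈ specialUnitaryGroup (Fin 2) ℂ) (hB : B ∈ specialUnitaryGroup (Fin 2) ℂ) :
    ∃ a b c : ℂ, 0 ≤ a.im ∧ normSq a = 1 ∧ normSq b + normSq c = 1 ∧
      SimulConj A B (su2 a 0) (su2 b c) := by
  obtain ⟨P, hP, a, ha, hPA⟩ := exists_conj_eq_su2_diag_im_nonneg hA
  have hconj : ∀ {M}, M ∈ specialUnitaryGroup (Fin 2) ℂ →
      P * M * star P ∈ specialUnitaryGroup (Fin 2) ℂ :=
    fun hM => mul_mem (mul_mem hP hM) (star_mem_specialUnitaryGroup hP)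
  have hPB := eq_su2_of_mem_specialUnitaryGroup (hconj hB)
  have hnormA := su2_mem_specialUnitaryGroup_iff.mp (hPA ▸ hconj hA)
  refine ⟨a, _, _, ha, by simpa using hnormA,
    su2_mem_specialUnitaryGroup_iff.mp (hPB ▸ hconj hB), P, hP, hPA.symm, hPB.symm⟩

theorem im_ne_zero_and_ne_zero_of_not_hasCommonEigenvector {a b c : ℂ}
    (h : ¬ HasCommonEigenvector (su2 a 0) (su2 b c)) : a.im ≠ 0 ∧ c ≠ 0 := by
  constructor
  · intro ha
    rw [su2_eq_smul_one (conj_eq_iff_im.mpr ha)] at h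
    exact h (hasCommonEigenvector_smul_one a _)
  · rintro rfl
    exact h ⟨![1, 0], a, b, by simp, by rw [su2_mulVec_single]; simp,
      by rw [su2_mulVec_single]; simp⟩

theorem su2_mul_su2_mul_star_su2 {u : ℂ} (hu : normSq u = 1) (x y : ℂ) :
    su2 u 0 * su2 x y * star (su2 u 0) = su2 x (u ^ 2 * y) := by
  have hu' : u * conj u = 1 := by rw [mul_conj, hu, ofReal_one]
  rw [star_su2, su2_mul, su2_mul]
  congr 1
  · simp only [neg_zero, map_zero]; linear_combination x * hu'
  · rw [conj_conj]; ring

theorem simulConj_su2_of_normSq_eq {a b c c' : ℂ} (hc : c ≠ 0) (h : normSq c = normSq c') :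
    SimulConj (su2 a 0) (su2 b c) (su2 a 0) (su2 b c') := by
  obtain ⟨u, hu⟩ := IsAlgClosed.exists_pow_nat_eq (c' / c) two_pos
  have hnorm : normSq u = 1 := by
    have hsq : normSq u ^ 2 = 1 := by
      rw [← map_pow, hu, map_div₀, ← h, div_self (normSq_pos.mpr hc).ne']
    exact (pow_eq_one_iff_of_nonneg (normSq_nonneg u) two_ne_zero).mp hsq
  refine ⟨su2 u 0, su2_mem_specialUnitaryGroup_iff.mpr (by simp [hnorm]), ?_, ?_⟩
  · rw [su2_mul_su2_mul_star_su2 hnorm, mul_zero]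
  · rw [su2_mul_su2_mul_star_su2 hnorm, hu, div_mul_cancel₀ _ hc]

theorem simulConj_su2_of_trace_eq {a₁ b₁ c₁ a₂ b₂ c₂ : ℂ}
    (ha₁ : 0 ≤ a₁.im) (ha₂ : 0 ≤ a₂.im) (hna₁ : normSq a₁ = 1) (hna₂ : normSq a₂ = 1)
    (hn₁ : normSq b₁ + normSq c₁ = 1) (hn₂ : normSq b₂ + normSq c₂ = 1)
    (htA : (su2 a₁ 0).trace = (su2 a₂ 0).trace) (htB : (su2 b₁ c₁).trace = (su2 b₂ c₂).trace)
    (htAB : (su2 a₁ 0 * su2 b₁ c₁).trace = (su2 a₂ 0 * su2 b₂ c₂).trace)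
    (hirr : ¬ HasCommonEigenvector (su2 a₁ 0) (su2 b₁ c₁)) :
    SimulConj (su2 a₁ 0) (su2 b₁ c₁) (su2 a₂ 0) (su2 b₂ c₂) := by
  obtain ⟨him, hc⟩ := im_ne_zero_and_ne_zero_of_not_hasCommonEigenvector hirr
  simp only [su2_mul, trace_su2, zero_mul, sub_zero, ofReal_inj] at htA htB htAB
  obtain rfl : a₁ = a₂ := Complex.eq_of_re_eq_of_normSq_eq_of_im_nonneg (by linarith)
    (hna₁.trans hna₂.symm) ha₁ ha₂
  obtain rfl : b₁ = b₂ := Complex.eq_of_re_eq_of_re_mul_eq him (by linarith) (by linarith)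
  exact simulConj_su2_of_normSq_eq hc (by linarith)

end SU2

end Matrix

theorem stmt14 (A₁ B₁ A₂ B₂ : Matrix (Fin 2) (Fin 2) ℂ)
    (hA₁ : A₁ ∈ Matrix.unitaryGroup (Fin 2) ℂ) (hdA₁ : A₁.det = 1)
    (hB₁ : B₁ ∈ Matrix.unitaryGroup (Fin 2) ℂ) (hdB₁ : B₁.det = 1)
    (hA₂ : A₂ ∈ Matrix.unitaryGroup (Fin 2) ℂ) (hdA₂ : A₂.det = 1)
    (hB₂ : B₂ ∈ Matrix.unitaryGroup (Fin 2) ℂ) (hdB₂ : B₂.det = 1)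
    (htA : A₁.trace = A₂.trace) (htB : B₁.trace = B₂.trace)
    (htAB : (A₁ * B₁).trace = (A₂ * B₂).trace)
    (hirr : ¬ ∃ (v : Fin 2 → ℂ) (μ ν : ℂ), v ≠ 0 ∧
      A₁.mulVec v = μ • v ∧ B₁.mulVec v = ν • v) :
    ∃ P : Matrix (Fin 2) (Fin 2) ℂ, P ∈ Matrix.unitaryGroup (Fin 2) ℂ ∧ P.det = 1 ∧
      A₂ = P * A₁ * P⁻¹ ∧ B₂ = P * B₁ * P⁻¹ := by
  obtain ⟨a₁, b₁, c₁, ha₁, hna₁, hn₁, h₁⟩ := exists_simulConj_su2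
    (mem_specialUnitaryGroup_iff.mpr ⟨hA₁, hdA₁⟩) (mem_specialUnitaryGroup_iff.mpr ⟨hB₁, hdB₁⟩)
  obtain ⟨a₂, b₂, c₂, ha₂, hna₂, hn₂, h₂⟩ := exists_simulConj_su2
    (mem_specialUnitaryGroup_iff.mpr ⟨hA₂, hdA₂⟩) (mem_specialUnitaryGroup_iff.mpr ⟨hB₂, hdB₂⟩)
  obtain ⟨htA₁, htB₁, htAB₁⟩ := h₁.traces_eq
  obtain ⟨htA₂, htB₂, htAB₂⟩ := h₂.traces_eq
  have h₁₂ := simulConj_su2_of_trace_eq ha₁ ha₂ hna₁ hna₂ hn₁ hn₂ (by rw [htA₁, htA₂, htA])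
    (by rw [htB₁, htB₂, htB]) (by rw [htAB₁, htAB₂, htAB])
    (fun h => hirr (h₁.symm.hasCommonEigenvector h))
  obtain ⟨P, hP, hPA, hPB⟩ := (h₁.trans h₁₂).trans h₂.symm
  obtain ⟨hPu, hPd⟩ := mem_specialUnitaryGroup_iff.mp hP
  have hPinv : P⁻¹ = star P := inv_eq_left_inv (Unitary.star_mul_self_of_mem hPu)
  exact ⟨P, hPu, hPd, by rwa [hPinv], by rwa [hPinv]⟩
end
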